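/- (Cordero-Erausquin–Maurey four function theorem) Let λ ∈ (0,1) and f₁, f₂, f₃, f₄ : ℝ^d → [0,∞) be integrable functions such that f₁(x)·f₂(y) ≤ f₃(λx + (1-λ)y)·f₄((1-λ)x + λy) for all x, y ∈ ℝ^d. Then (∫f₁)(∫f₂) ≤ (∫f₃)(∫f₄). -/

import Mathlib

/-!
Normalize `∫ f₁ = ∫ f₂ = 1` and work on the line first. Monotone maps `X`, `Y` (quantile functions
composed with the Cauchy distribution function) transport the Cauchy density `ρ` to `f₁`, `f₂`:
`f₁(X) X' = ρ = f₂(Y) Y'`. The maps `U = λX + (1-λ)Y` and `V = (1-λ)X + λY` are monotone with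
`U'V' - X'Y' = λ(1-λ)(X'-Y')² ≥ 0`, so `ρ² ≤ f₃(U) U' · f₄(V) V'`; Cauchy–Schwarz and the change of
variables `∫ f₃(U) U' ≤ ∫ f₃` give `1 ≤ ∫ f₃ ∫ f₄`. In higher dimension, the integrals of
`f₁, …, f₄` over slices `{a} × ℝⁿ` satisfy the one-dimensional hypothesis in `a` by induction,
and Fubini concludes.
-/

open MeasureTheory Set Filter Real ProbabilityTheory
open scoped ENNReal NNReal Topology

noncomputable section

section

variable {α : Type*} [MeasurableSpace α] {μ : Measure α}

theorem exists_seq_le_lintegral_ne_top_iSup_eq [SigmaFinite μ] {f : α → ℝ≥0∞}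
    (hf : Measurable f) :
    ∃ u : ℕ → α → ℝ≥0∞, (∀ n, Measurable (u n)) ∧ (∀ n, u n ≤ f) ∧
      (∀ n, ∫⁻ x, u n x ∂μ ≠ ∞) ∧ ⨆ n, ∫⁻ x, u n x ∂μ = ∫⁻ x, f x ∂μ := by
  set u : ℕ → α → ℝ≥0∞ := fun n => (spanningSets μ n).indicator fun x => min (f x) n
  have hmono : Monotone u := fun m n hmn =>
    indicator_le_indicator_of_subset (monotone_spanningSets μ hmn) (fun _ => zero_le)
      |>.trans fun x => indicator_le_indicator (min_le_min le_rfl (by exact_mod_cast hmn))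
  have hsup : ∀ x, ⨆ n, u n x = f x := by
    intro x
    obtain ⟨N, hN⟩ := mem_iUnion.1 (iUnion_spanningSets μ ▸ mem_univ x)
    refine le_antisymm (iSup_le fun n => indicator_le (fun _ _ => min_le_left _ _) x) ?_
    calc f x = ⨆ n : ℕ, min (f x) n := by
          rw [← inf_iSup_eq, ENNReal.iSup_natCast, inf_top_eq]
      _ ≤ ⨆ n, u n x := iSup_le fun n => le_iSup_of_le (max n N) <| by
          simp only [u, indicator_of_mem (monotone_spanningSets μ (le_max_right n N) hN)]
          exact min_le_min le_rfl (by exact_mod_cast le_max_left n N)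
  have hmeas : ∀ n, Measurable (u n) := fun n =>
    (hf.min measurable_const).indicator (measurableSet_spanningSets μ n)
  refine ⟨u, hmeas, fun n x => hsup x ▸ le_iSup (u · x) n, fun n => ?_, ?_⟩
  · refine ne_top_of_le_ne_top ?_ (lintegral_mono fun x =>
      indicator_le_indicator (s := spanningSets μ n) (g := fun _ => (n : ℝ≥0∞))
        (min_le_right (f x) n))
    rw [lintegral_indicator_const (measurableSet_spanningSets μ n)]
    exact ENNReal.mul_ne_top (ENNReal.natCast_ne_top n) (measure_spanningSets_lt_top μ n).ne
  · rw [← lintegral_iSup hmeas hmono]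
    simp_rw [hsup]

theorem AEMeasurable.exists_measurable_ge_ae_eq {f : α → ℝ≥0∞} (hf : AEMeasurable f μ) :
    ∃ g : α → ℝ≥0∞, Measurable g ∧ f ≤ g ∧ g =ᵐ[μ] f := by
  classical
  set N := toMeasurable μ {x | f x ≠ hf.mk f x}
  have hf_eq : ∀ x ∉ N, f x = hf.mk f x := fun x hx =>
    not_not.1 fun h => hx (subset_toMeasurable _ _ h)
  refine ⟨N.piecewise ⊤ (hf.mk f),
    measurable_const.piecewise (measurableSet_toMeasurable _ _) hf.measurable_mk, fun x => ?_, ?_⟩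
  · by_cases hx : x ∈ N
    · simp [hx]
    · simp [hx, hf_eq x hx]
  · have hN : ∀ᵐ x ∂μ, x ∉ N :=
      measure_eq_zero_iff_ae_notMem.1 (by rw [measure_toMeasurable]; exact hf.ae_eq_mk)
    filter_upwards [hN] with x hx
    simp [hx, hf_eq x hx]

end

variable {E F : Type*} [MeasurableSpace E] [MeasurableSpace F]

def FourFunctionInequality [Add E] [SMul ℝ E] (μ : Measure E) (lam : ℝ) : Prop :=
  ∀ g₁ g₂ g₃ g₄ : E → ℝ≥0∞, Measurable g₁ → Measurable g₂ → Measurable g₃ → Measurable g₄ →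
    (∀ x y, g₁ x * g₂ y ≤ g₃ (lam • x + (1 - lam) • y) * g₄ ((1 - lam) • x + lam • y)) →
    (∫⁻ x, g₁ x ∂μ) * ∫⁻ x, g₂ x ∂μ ≤ (∫⁻ x, g₃ x ∂μ) * ∫⁻ x, g₄ x ∂μ

namespace FourFunctionInequality

variable {lam : ℝ}

theorem of_unique [Unique E] [Add E] [SMul ℝ E] (μ : Measure E) (lam : ℝ) :
    FourFunctionInequality μ lam := by
  intro g₁ g₂ g₃ g₄ _ _ _ _ hg
  simp only [lintegral_unique]
  have := hg default default
  rw [Subsingleton.elim (lam • default + (1 - lam) • default : E) default,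
    Subsingleton.elim ((1 - lam) • default + lam • default : E) default] at this
  rw [mul_mul_mul_comm, mul_mul_mul_comm (g₃ _)]
  gcongr

theorem prod [Add E] [SMul ℝ E] [Add F] [SMul ℝ F] {μ : Measure E} {ν : Measure F} [SFinite ν]
    (hμ : FourFunctionInequality μ lam) (hν : FourFunctionInequality ν lam) :
    FourFunctionInequality (μ.prod ν) lam := by
  intro g₁ g₂ g₃ g₄ hm₁ hm₂ hm₃ hm₄ hg
  simp only [lintegral_prod _ hm₁.aemeasurable, lintegral_prod _ hm₂.aemeasurable,
    lintegral_prod _ hm₃.aemeasurable, lintegral_prod _ hm₄.aemeasurable]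
  refine hμ _ _ _ _ hm₁.lintegral_prod_right' hm₂.lintegral_prod_right'
    hm₃.lintegral_prod_right' hm₄.lintegral_prod_right' fun a b => ?_
  exact hν _ _ _ _ (hm₁.comp measurable_prodMk_left) (hm₂.comp measurable_prodMk_left)
    (hm₃.comp measurable_prodMk_left) (hm₄.comp measurable_prodMk_left)
    fun x y => hg (a, x) (b, y)

theorem of_measurePreserving [AddCommMonoid E] [Module ℝ E] [AddCommMonoid F] [Module ℝ F]
    {μ : Measure E} {ν : Measure F} (hμ : FourFunctionInequality μ lam) (e : E →ₗ[ℝ] F)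
    (he : MeasurePreserving e μ ν) : FourFunctionInequality ν lam := by
  intro g₁ g₂ g₃ g₄ hm₁ hm₂ hm₃ hm₄ hg
  rw [← he.lintegral_comp hm₁, ← he.lintegral_comp hm₂, ← he.lintegral_comp hm₃,
    ← he.lintegral_comp hm₄]
  refine hμ _ _ _ _ (hm₁.comp he.measurable) (hm₂.comp he.measurable)
    (hm₃.comp he.measurable) (hm₄.comp he.measurable) fun x y => ?_
  simpa only [Function.comp, map_add, map_smul] using hg (e x) (e y)

theorem of_lintegral_eq_one [Add E] [SMul ℝ E] {μ : Measure E} [SigmaFinite μ]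
    (h : ∀ g₁ g₂ g₃ g₄ : E → ℝ≥0∞, Measurable g₁ → Measurable g₂ → Measurable g₃ →
      Measurable g₄ → ∫⁻ x, g₁ x ∂μ = 1 → ∫⁻ x, g₂ x ∂μ = 1 →
      (∀ x y, g₁ x * g₂ y ≤ g₃ (lam • x + (1 - lam) • y) * g₄ ((1 - lam) • x + lam • y)) →
      1 ≤ (∫⁻ x, g₃ x ∂μ) * ∫⁻ x, g₄ x ∂μ) :
    FourFunctionInequality μ lam := by
  intro g₁ g₂ g₃ g₄ hm₁ hm₂ hm₃ hm₄ hg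
  set C := (∫⁻ x, g₃ x ∂μ) * ∫⁻ x, g₄ x ∂μ
  have finite : ∀ u₁ u₂ : E → ℝ≥0∞, Measurable u₁ → Measurable u₂ → u₁ ≤ g₁ → u₂ ≤ g₂ →
      ∫⁻ x, u₁ x ∂μ ≠ ∞ → ∫⁻ x, u₂ x ∂μ ≠ ∞ → (∫⁻ x, u₁ x ∂μ) * ∫⁻ x, u₂ x ∂μ ≤ C := by
    intro u₁ u₂ hu₁ hu₂ hle₁ hle₂ htop₁ htop₂
    set c₁ := ∫⁻ x, u₁ x ∂μ
    set c₂ := ∫⁻ x, u₂ x ∂μ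
    rcases eq_or_ne c₁ 0 with h0₁ | h0₁
    · simp [h0₁]
    rcases eq_or_ne c₂ 0 with h0₂ | h0₂
    · simp [h0₂]
    have hnorm : 1 ≤ (∫⁻ x, g₃ x * c₁⁻¹ ∂μ) * ∫⁻ x, g₄ x * c₂⁻¹ ∂μ := by
      refine h (fun x => u₁ x * c₁⁻¹) (fun x => u₂ x * c₂⁻¹) (fun x => g₃ x * c₁⁻¹)
        (fun x => g₄ x * c₂⁻¹) (hu₁.mul_const _) (hu₂.mul_const _) (hm₃.mul_const _)
        (hm₄.mul_const _) ?_ ?_ fun x y => ?_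
      · rw [lintegral_mul_const _ hu₁, ENNReal.mul_inv_cancel h0₁ htop₁]
      · rw [lintegral_mul_const _ hu₂, ENNReal.mul_inv_cancel h0₂ htop₂]
      · rw [mul_mul_mul_comm, mul_mul_mul_comm (g₃ _)]
        gcongr ?_ * _
        exact (mul_le_mul' (hle₁ x) (hle₂ y)).trans (hg x y)
    rw [lintegral_mul_const _ hm₃, lintegral_mul_const _ hm₄, mul_mul_mul_comm] at hnorm
    calc c₁ * c₂ ≤ c₁ * c₂ * (C * (c₁⁻¹ * c₂⁻¹)) := le_mul_of_one_le_right' hnorm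
      _ = C * ((c₁ * c₁⁻¹) * (c₂ * c₂⁻¹)) := by ring
      _ = C := by
        rw [ENNReal.mul_inv_cancel h0₁ htop₁, ENNReal.mul_inv_cancel h0₂ htop₂, mul_one, mul_one]
  obtain ⟨u₁, hu₁, hle₁, htop₁, hsup₁⟩ := exists_seq_le_lintegral_ne_top_iSup_eq (μ := μ) hm₁
  obtain ⟨u₂, hu₂, hle₂, htop₂, hsup₂⟩ := exists_seq_le_lintegral_ne_top_iSup_eq (μ := μ) hm₂
  rw [← hsup₁, ← hsup₂, ENNReal.iSup_mul]
  refine iSup_le fun m => ?_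
  rw [ENNReal.mul_iSup]
  exact iSup_le fun n => finite _ _ (hu₁ m) (hu₂ n) (hle₁ m) (hle₂ n) (htop₁ m) (htop₂ n)

theorem integral_mul_integral_le [Add E] [SMul ℝ E] {μ : Measure E}
    (hμ : FourFunctionInequality μ lam) {f₁ f₂ f₃ f₄ : E → ℝ}
    (hnn₁ : ∀ x, 0 ≤ f₁ x) (hnn₂ : ∀ x, 0 ≤ f₂ x) (hnn₃ : ∀ x, 0 ≤ f₃ x) (hnn₄ : ∀ x, 0 ≤ f₄ x)
    (hi₁ : Integrable f₁ μ) (hi₂ : Integrable f₂ μ) (hi₃ : Integrable f₃ μ)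
    (hi₄ : Integrable f₄ μ)
    (h : ∀ x y, f₁ x * f₂ y ≤ f₃ (lam • x + (1 - lam) • y) * f₄ ((1 - lam) • x + lam • y)) :
    (∫ x, f₁ x ∂μ) * ∫ x, f₂ x ∂μ ≤ (∫ x, f₃ x ∂μ) * ∫ x, f₄ x ∂μ := by
  obtain ⟨G₁, hG₁, hG₁le, hG₁eq⟩ :=
    exists_measurable_le_lintegral_eq μ fun x => ENNReal.ofReal (f₁ x)
  obtain ⟨G₂, hG₂, hG₂le, hG₂eq⟩ :=
    exists_measurable_le_lintegral_eq μ fun x => ENNReal.ofReal (f₂ x)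
  obtain ⟨G₃, hG₃, hG₃ge, hG₃eq⟩ := hi₃.aemeasurable.ennreal_ofReal.exists_measurable_ge_ae_eq
  obtain ⟨G₄, hG₄, hG₄ge, hG₄eq⟩ := hi₄.aemeasurable.ennreal_ofReal.exists_measurable_ge_ae_eq
  have hG := hμ G₁ G₂ G₃ G₄ hG₁ hG₂ hG₃ hG₄ fun x y => calc
    G₁ x * G₂ y ≤ ENNReal.ofReal (f₁ x) * ENNReal.ofReal (f₂ y) := mul_le_mul' (hG₁le x) (hG₂le y)
    _ = ENNReal.ofReal (f₁ x * f₂ y) := (ENNReal.ofReal_mul (hnn₁ x)).symm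
    _ ≤ ENNReal.ofReal (f₃ (lam • x + (1 - lam) • y) * f₄ ((1 - lam) • x + lam • y)) :=
      ENNReal.ofReal_le_ofReal (h x y)
    _ = ENNReal.ofReal (f₃ (lam • x + (1 - lam) • y)) *
        ENNReal.ofReal (f₄ ((1 - lam) • x + lam • y)) := ENNReal.ofReal_mul (hnn₃ _)
    _ ≤ G₃ (lam • x + (1 - lam) • y) * G₄ ((1 - lam) • x + lam • y) :=
      mul_le_mul' (hG₃ge _) (hG₄ge _)
  rw [← hG₁eq, ← hG₂eq, lintegral_congr_ae hG₃eq, lintegral_congr_ae hG₄eq,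
    ← ofReal_integral_eq_lintegral_ofReal hi₁ (ae_of_all _ hnn₁),
    ← ofReal_integral_eq_lintegral_ofReal hi₂ (ae_of_all _ hnn₂),
    ← ofReal_integral_eq_lintegral_ofReal hi₃ (ae_of_all _ hnn₃),
    ← ofReal_integral_eq_lintegral_ofReal hi₄ (ae_of_all _ hnn₄),
    ← ENNReal.ofReal_mul (integral_nonneg hnn₁), ← ENNReal.ofReal_mul (integral_nonneg hnn₃)]
    at hG
  exact (ENNReal.ofReal_le_ofReal_iff
    (mul_nonneg (integral_nonneg hnn₃) (integral_nonneg hnn₄))).1 hG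

end FourFunctionInequality

def pullbackDensity (g : ℝ → ℝ≥0∞) (X : ℝ → ℝ) (r : ℝ) : ℝ≥0∞ :=
  ENNReal.ofReal (deriv X r) * g (X r)

theorem measurable_pullbackDensity {g : ℝ → ℝ≥0∞} {X : ℝ → ℝ} (hg : Measurable g)
    (hX : Measurable X) : Measurable (pullbackDensity g X) :=
  (ENNReal.measurable_ofReal.comp (measurable_deriv X)).mul (hg.comp hX)

theorem setLIntegral_pullbackDensity_le {X : ℝ → ℝ} {s : Set ℝ} (hs : MeasurableSet s)
    (hX : Monotone X) (hd : ∀ r ∈ s, DifferentiableAt ℝ X r) (g : ℝ → ℝ≥0∞) :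
    ∫⁻ r in s, pullbackDensity g X r ≤ ∫⁻ y, g y := by
  unfold pullbackDensity
  rw [← lintegral_image_eq_lintegral_deriv_mul_of_monotoneOn hs
    (fun r hr => (hd r hr).hasDerivAt.hasDerivWithinAt) (hX.monotoneOn s)]
  exact setLIntegral_le_lintegral _ _

theorem mul_le_convex_mul_convex {lam : ℝ} (hlam : lam ∈ Icc (0 : ℝ) 1) (a b : ℝ) :
    a * b ≤ (lam * a + (1 - lam) * b) * ((1 - lam) * a + lam * b) := by
  nlinarith [mul_nonneg (mul_nonneg hlam.1 (sub_nonneg.2 hlam.2)) (sq_nonneg (a - b))]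

theorem pullbackDensity_mul_le {lam : ℝ} (hlam : lam ∈ Icc (0 : ℝ) 1) {g₁ g₂ g₃ g₄ : ℝ → ℝ≥0∞}
    (hg : ∀ x y, g₁ x * g₂ y ≤ g₃ (lam * x + (1 - lam) * y) * g₄ ((1 - lam) * x + lam * y))
    {X Y : ℝ → ℝ} (hX : Monotone X) (hY : Monotone Y) {r : ℝ} (hXr : DifferentiableAt ℝ X r)
    (hYr : DifferentiableAt ℝ Y r) :
    pullbackDensity g₁ X r * pullbackDensity g₂ Y r ≤
      pullbackDensity g₃ (fun r => lam * X r + (1 - lam) * Y r) r *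
        pullbackDensity g₄ (fun r => (1 - lam) * X r + lam * Y r) r := by
  have hU : Monotone fun r => lam * X r + (1 - lam) * Y r :=
    (hX.const_mul hlam.1).add (hY.const_mul (sub_nonneg.2 hlam.2))
  have hU' : HasDerivAt (fun r => lam * X r + (1 - lam) * Y r)
      (lam * deriv X r + (1 - lam) * deriv Y r) r :=
    (hXr.hasDerivAt.const_mul lam).add (hYr.hasDerivAt.const_mul (1 - lam))
  have hV' : HasDerivAt (fun r => (1 - lam) * X r + lam * Y r)
      ((1 - lam) * deriv X r + lam * deriv Y r) r :=
    (hXr.hasDerivAt.const_mul (1 - lam)).add (hYr.hasDerivAt.const_mul lam)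
  have hderiv : ENNReal.ofReal (deriv X r) * ENNReal.ofReal (deriv Y r) ≤
      ENNReal.ofReal (deriv (fun r => lam * X r + (1 - lam) * Y r) r) *
        ENNReal.ofReal (deriv (fun r => (1 - lam) * X r + lam * Y r) r) := by
    rw [← ENNReal.ofReal_mul hX.deriv_nonneg, ← ENNReal.ofReal_mul hU.deriv_nonneg, hU'.deriv,
      hV'.deriv]
    exact ENNReal.ofReal_le_ofReal (mul_le_convex_mul_convex hlam _ _)
  unfold pullbackDensity
  rw [mul_mul_mul_comm, mul_mul_mul_comm _ (g₃ _)]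
  exact mul_le_mul' hderiv (hg _ _)

namespace ProbabilityTheory

-- Meaningful for `0 < t < 1` only: otherwise the set is empty or unbounded below, `sInf` is junk.
def quantile (μ : Measure ℝ) (t : ℝ) : ℝ := sInf {s | t ≤ cdf μ s}

section Quantile

variable {μ : Measure ℝ} {t : ℝ}

theorem bddBelow_setOf_le_cdf (ht : 0 < t) : BddBelow {s | t ≤ cdf μ s} := by
  obtain ⟨s₀, hs₀⟩ :=
    ((tendsto_cdf_atBot μ).eventually (eventually_lt_nhds ht)).exists_forall_of_atBot
  exact ⟨s₀, fun s hs => not_lt.1 fun hlt => (hs₀ s hlt.le).not_ge hs⟩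

theorem nonempty_setOf_le_cdf (ht : t < 1) : {s | t ≤ cdf μ s}.Nonempty :=
  let ⟨s, hs⟩ := ((tendsto_cdf_atTop μ).eventually (eventually_gt_nhds ht)).exists
  ⟨s, hs.le⟩

theorem le_cdf_quantile (ht1 : t < 1) : t ≤ cdf μ (quantile μ t) := by
  refine ge_of_tendsto ((cdf μ).right_continuous _ |>.mono Ioi_subset_Ici_self)
    (eventually_nhdsWithin_of_forall fun s hs => ?_)
  obtain ⟨s', hs', hs's⟩ := exists_lt_of_csInf_lt (nonempty_setOf_le_cdf ht1) hs
  exact hs'.trans (monotone_cdf μ hs's.le)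

theorem quantile_le_iff (ht0 : 0 < t) (ht1 : t < 1) {s : ℝ} :
    quantile μ t ≤ s ↔ t ≤ cdf μ s :=
  ⟨fun h => (le_cdf_quantile ht1).trans (monotone_cdf μ h),
    fun h => csInf_le (bddBelow_setOf_le_cdf ht0) h⟩

theorem cdf_quantile (hμ : Continuous (cdf μ)) (ht0 : 0 < t) (ht1 : t < 1) :
    cdf μ (quantile μ t) = t := by
  have hleft : Tendsto (cdf μ) (𝓝[<] quantile μ t) (𝓝 (cdf μ (quantile μ t))) :=
    tendsto_nhdsWithin_of_tendsto_nhds hμ.continuousAt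
  refine le_antisymm (le_of_tendsto hleft (eventually_nhdsWithin_of_forall fun s hs => ?_))
    (le_cdf_quantile ht1)
  exact (not_le.1 fun h => (not_le.2 hs) ((quantile_le_iff ht0 ht1).2 h)).le

theorem continuous_cdf [IsProbabilityMeasure μ] [NullSingletonClass μ] : Continuous (cdf μ) := by
  refine continuous_iff_continuousAt.2 fun a => ?_
  have hjump : (cdf μ).measure {a} = 0 := by rw [measure_cdf, measure_singleton]
  rw [StieltjesFunction.measure_singleton, ENNReal.ofReal_eq_zero, sub_nonpos] at hjump
  exact continuousAt_iff_continuous_left'_right'.2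
    ⟨(monotone_cdf μ).continuousWithinAt_Iio_iff_leftLim_eq.2
      (le_antisymm ((monotone_cdf μ).leftLim_le le_rfl) hjump),
    ((cdf μ).right_continuous a).mono Ioi_subset_Ici_self⟩

end Quantile

theorem hasDerivAt_arctan_div_pi_add_half (r : ℝ) :
    HasDerivAt (fun x => arctan x / π + 1 / 2) (cauchyPDFReal 0 1 r) r := by
  refine (((hasDerivAt_arctan r).div_const π).add_const (1 / 2 : ℝ)).congr_deriv ?_
  rw [cauchyPDFReal_def]
  push_cast
  ring

theorem cdf_cauchyMeasure (r : ℝ) : cdf (cauchyMeasure 0 1) r = arctan r / π + 1 / 2 := by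
  have hlim : Tendsto (fun x => arctan x / π + 1 / 2) atBot (𝓝 0) := by
    convert ((tendsto_arctan_atBot.mono_right nhdsWithin_le_nhds).div_const π).add_const
      (1 / 2 : ℝ) using 2
    field_simp
    ring
  have hint := integral_Iic_of_hasDerivAt_of_tendsto
    (hasDerivAt_arctan_div_pi_add_half r).continuousAt.continuousWithinAt
    (fun x _ => hasDerivAt_arctan_div_pi_add_half x) (integrable_cauchyPDFReal 0).integrableOn
    hlim
  have hnonneg : 0 ≤ arctan r / π + 1 / 2 := by
    rw [← sub_zero (arctan r / π + 1 / 2), ← hint]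
    exact setIntegral_nonneg measurableSet_Iic fun x _ => (cauchyPDF_pos 0 one_ne_zero x).le
  rw [← ENNReal.ofReal_eq_ofReal_iff (cdf_nonneg _ r) hnonneg, ofReal_cdf,
    cauchyMeasure_of_scale_ne_zero 0 one_ne_zero, withDensity_apply _ measurableSet_Iic,
    ← sub_zero (arctan r / π + 1 / 2), ← hint]
  exact (ofReal_integral_eq_lintegral_ofReal (integrable_cauchyPDFReal 0).integrableOn
    (ae_of_all _ fun x => (cauchyPDF_pos 0 one_ne_zero x).le)).symm

theorem strictMono_cdf_cauchyMeasure : StrictMono (cdf (cauchyMeasure 0 1)) := by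
  intro a b hab
  simp only [cdf_cauchyMeasure]
  gcongr

theorem cdf_cauchyMeasure_mem_Ioo (r : ℝ) : cdf (cauchyMeasure 0 1) r ∈ Ioo 0 1 := by
  rw [cdf_cauchyMeasure]
  have h₁ : -(1 / 2) < arctan r / π := by
    rw [lt_div_iff₀ pi_pos]
    linarith [neg_pi_div_two_lt_arctan r]
  have h₂ : arctan r / π < 1 / 2 := by
    rw [div_lt_iff₀ pi_pos]
    linarith [arctan_lt_pi_div_two r]
  constructor <;> linarith

theorem volume_absolutelyContinuous_cauchyMeasure : volume ≪ cauchyMeasure 0 1 := by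
  rw [cauchyMeasure_of_scale_ne_zero 0 one_ne_zero]
  exact withDensity_absolutelyContinuous' (measurable_cauchyPDF 0 1).aemeasurable
    (ae_of_all _ fun x => (ENNReal.ofReal_pos.2 (cauchyPDF_pos 0 one_ne_zero x)).ne')

theorem cauchyMeasure_setOf_cdf_le {t : ℝ} (ht : t ≤ 1) :
    cauchyMeasure 0 1 {r | cdf (cauchyMeasure 0 1) r ≤ t} = ENNReal.ofReal t := by
  rcases le_or_gt t 0 with ht0 | ht0
  · have : {r | cdf (cauchyMeasure 0 1) r ≤ t} = ∅ :=
      eq_empty_of_forall_notMem fun r hr =>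
        (ht0.trans_lt (cdf_cauchyMeasure_mem_Ioo r).1).not_ge hr
    rw [this, measure_empty, ENNReal.ofReal_of_nonpos ht0]
  rcases ht.eq_or_lt with rfl | ht1
  · have : {r | cdf (cauchyMeasure 0 1) r ≤ 1} = univ :=
      eq_univ_of_forall fun r => (cdf_cauchyMeasure_mem_Ioo r).2.le
    rw [this, measure_univ, ENNReal.ofReal_one]
  set b := tan (π * (t - 1 / 2))
  have hb : cdf (cauchyMeasure 0 1) b = t := by
    rw [cdf_cauchyMeasure, arctan_tan (by nlinarith [pi_pos]) (by nlinarith [pi_pos])]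
    field_simp
    ring
  have : {r | cdf (cauchyMeasure 0 1) r ≤ t} = Iic b := by
    ext r
    rw [mem_ofPred_eq, mem_Iic, ← hb, strictMono_cdf_cauchyMeasure.le_iff_le]
  rw [this, ← ofReal_cdf, hb]

theorem hasDerivAt_cdf_cauchyMeasure (r : ℝ) :
    HasDerivAt (cdf (cauchyMeasure 0 1)) (cauchyPDFReal 0 1 r) r := by
  simpa only [← funext cdf_cauchyMeasure] using hasDerivAt_arctan_div_pi_add_half r

section Transport

variable (μ : Measure ℝ)

theorem quantile_cdf_cauchyMeasure_le_iff (r s : ℝ) :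
    quantile μ (cdf (cauchyMeasure 0 1) r) ≤ s ↔ cdf (cauchyMeasure 0 1) r ≤ cdf μ s :=
  quantile_le_iff (cdf_cauchyMeasure_mem_Ioo r).1 (cdf_cauchyMeasure_mem_Ioo r).2

theorem monotone_quantile_cdf_cauchyMeasure :
    Monotone fun r => quantile μ (cdf (cauchyMeasure 0 1) r) := fun r r' h =>
  (quantile_cdf_cauchyMeasure_le_iff μ r _).2 <| (monotone_cdf _ h).trans <|
    le_cdf_quantile (cdf_cauchyMeasure_mem_Ioo r').2

theorem map_quantile_cdf_cauchyMeasure [IsProbabilityMeasure μ] :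
    (cauchyMeasure 0 1).map (fun r => quantile μ (cdf (cauchyMeasure 0 1) r)) = μ := by
  have hmeas := (monotone_quantile_cdf_cauchyMeasure μ).measurable
  have := Measure.isProbabilityMeasure_map (μ := cauchyMeasure 0 1) hmeas.aemeasurable
  refine Measure.ext_of_Iic _ _ fun a => ?_
  have hpre : (fun r => quantile μ (cdf (cauchyMeasure 0 1) r)) ⁻¹' Iic a =
      {r | cdf (cauchyMeasure 0 1) r ≤ cdf μ a} :=
    ext fun r => quantile_cdf_cauchyMeasure_le_iff μ r a
  rw [Measure.map_apply hmeas measurableSet_Iic, hpre,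
    cauchyMeasure_setOf_cdf_le (cdf_le_one μ a), ofReal_cdf]

theorem cdf_quantile_cdf_cauchyMeasure (hμ : Continuous (cdf μ)) (r : ℝ) :
    cdf μ (quantile μ (cdf (cauchyMeasure 0 1) r)) = cdf (cauchyMeasure 0 1) r :=
  cdf_quantile hμ (cdf_cauchyMeasure_mem_Ioo r).1 (cdf_cauchyMeasure_mem_Ioo r).2

end Transport

theorem ae_hasDerivAt_cdf_withDensity {g : ℝ → ℝ≥0∞} (hg : Measurable g)
    [IsProbabilityMeasure (volume.withDensity g)] :
    ∀ᵐ x, HasDerivAt (cdf (volume.withDensity g)) (g x).toReal x := by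
  filter_upwards [(cdf (volume.withDensity g)).ae_hasDerivAt,
    Measure.rnDeriv_withDensity volume hg] with x hx hrn
  rwa [measure_cdf, hrn] at hx

theorem exists_monotone_pullbackDensity_eq_cauchyPDF {g : ℝ → ℝ≥0∞} (hg : Measurable g)
    (hg1 : ∫⁻ x, g x = 1) :
    ∃ X : ℝ → ℝ, Monotone X ∧ (∀ᵐ r, DifferentiableAt ℝ X r) ∧
      pullbackDensity g X =ᵐ[volume] cauchyPDF 0 1 := by
  set μ := volume.withDensity g
  have : IsProbabilityMeasure μ :=
    ⟨by rw [withDensity_apply _ MeasurableSet.univ, Measure.restrict_univ, hg1]⟩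
  have hF := continuous_cdf (μ := μ)
  set X := fun r => quantile μ (cdf (cauchyMeasure 0 1) r)
  have hX := monotone_quantile_cdf_cauchyMeasure μ
  -- `X` maps the Cauchy law to `μ ≪ volume`, so `X ⁻¹' N` is null whenever `N` is.
  have hderivF : ∀ᵐ r, HasDerivAt (cdf μ) (g (X r)).toReal (X r) := by
    refine volume_absolutelyContinuous_cauchyMeasure.ae_le
      (ae_of_ae_map (p := fun s => HasDerivAt (cdf μ) (g s).toReal s)
        hX.measurable.aemeasurable ?_)
    rw [map_quantile_cdf_cauchyMeasure]
    exact (withDensity_absolutelyContinuous _ _).ae_le (ae_hasDerivAt_cdf_withDensity hg)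
  refine ⟨X, hX, hX.ae_differentiableAt, ?_⟩
  filter_upwards [hX.ae_differentiableAt, hderivF] with r hXr hFr
  have hchain : deriv X r * (g (X r)).toReal = cauchyPDFReal 0 1 r := by
    have hFX : cdf μ ∘ X = cdf (cauchyMeasure 0 1) :=
      funext (cdf_quantile_cdf_cauchyMeasure μ hF)
    rw [mul_comm]
    refine (hFr.comp r hXr.hasDerivAt).unique ?_
    rw [hFX]
    exact hasDerivAt_cdf_cauchyMeasure r
  have hfin : g (X r) ≠ ∞ := fun htop => by
    have := cauchyPDF_pos 0 one_ne_zero r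
    rw [← hchain, htop, ENNReal.toReal_top, mul_zero] at this
    exact this.false
  rw [pullbackDensity, cauchyPDF, ← hchain, ENNReal.ofReal_mul hX.deriv_nonneg,
    ENNReal.ofReal_toReal hfin]

end ProbabilityTheory

theorem ENNReal.le_rpow_inv_two_mul_rpow_inv_two {a b c : ℝ≥0∞} (h : c * c ≤ a * b) :
    c ≤ a ^ (2⁻¹ : ℝ) * b ^ (2⁻¹ : ℝ) := by
  rw [← ENNReal.mul_rpow_of_nonneg _ _ (by norm_num), ENNReal.le_rpow_inv_iff two_pos,
    ENNReal.rpow_two, sq]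
  exact h

theorem one_le_lintegral_mul_lintegral_of_lintegral_eq_one {lam : ℝ}
    (hlam : lam ∈ Icc (0 : ℝ) 1) {g₁ g₂ g₃ g₄ : ℝ → ℝ≥0∞} (hm₁ : Measurable g₁)
    (hm₂ : Measurable g₂) (hm₃ : Measurable g₃) (hm₄ : Measurable g₄) (h₁ : ∫⁻ x, g₁ x = 1)
    (h₂ : ∫⁻ x, g₂ x = 1)
    (hg : ∀ x y, g₁ x * g₂ y ≤ g₃ (lam * x + (1 - lam) * y) * g₄ ((1 - lam) * x + lam * y)) :
    1 ≤ (∫⁻ x, g₃ x) * ∫⁻ x, g₄ x := by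
  obtain ⟨X, hX, hXd, hXρ⟩ := exists_monotone_pullbackDensity_eq_cauchyPDF hm₁ h₁
  obtain ⟨Y, hY, hYd, hYρ⟩ := exists_monotone_pullbackDensity_eq_cauchyPDF hm₂ h₂
  set U := fun r => lam * X r + (1 - lam) * Y r
  set V := fun r => (1 - lam) * X r + lam * Y r
  have hU : Monotone U := (hX.const_mul hlam.1).add (hY.const_mul (sub_nonneg.2 hlam.2))
  have hV : Monotone V := (hX.const_mul (sub_nonneg.2 hlam.2)).add (hY.const_mul hlam.1)
  set s := {r | DifferentiableAt ℝ X r} ∩ {r | DifferentiableAt ℝ Y r}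
  have hs : MeasurableSet s :=
    (measurableSet_of_differentiableAt ℝ X).inter (measurableSet_of_differentiableAt ℝ Y)
  have hsae : ∀ᵐ r, r ∈ s := hXd.and hYd
  have hpoint : ∀ᵐ r, cauchyPDF 0 1 r ≤
      pullbackDensity g₃ U r ^ (2⁻¹ : ℝ) * pullbackDensity g₄ V r ^ (2⁻¹ : ℝ) := by
    filter_upwards [hXρ, hYρ, hsae] with r hXr hYr hr
    refine ENNReal.le_rpow_inv_two_mul_rpow_inv_two ?_
    simpa only [hXr, hYr] using pullbackDensity_mul_le hlam hg hX hY hr.1 hr.2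
  have key : 1 ≤ ((∫⁻ x, g₃ x) * ∫⁻ x, g₄ x) ^ (2⁻¹ : ℝ) := calc
    1 = ∫⁻ r in s, cauchyPDF 0 1 r := by
      rw [Measure.restrict_eq_self_of_ae_mem hsae, lintegral_cauchyPDF_eq_one 0 one_ne_zero]
    _ ≤ ∫⁻ r in s, pullbackDensity g₃ U r ^ (2⁻¹ : ℝ) * pullbackDensity g₄ V r ^ (2⁻¹ : ℝ) :=
      lintegral_mono_ae (ae_restrict_of_ae hpoint)
    _ ≤ (∫⁻ r in s, pullbackDensity g₃ U r) ^ (2⁻¹ : ℝ) *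
        (∫⁻ r in s, pullbackDensity g₄ V r) ^ (2⁻¹ : ℝ) :=
      ENNReal.lintegral_mul_norm_pow_le (measurable_pullbackDensity hm₃ hU.measurable).aemeasurable
        (measurable_pullbackDensity hm₄ hV.measurable).aemeasurable (by norm_num) (by norm_num)
        (by norm_num)
    _ ≤ (∫⁻ x, g₃ x) ^ (2⁻¹ : ℝ) * (∫⁻ x, g₄ x) ^ (2⁻¹ : ℝ) := by
      gcongr ?_ ^ _ * ?_ ^ _
      · exact setLIntegral_pullbackDensity_le hs hU
          (fun r hr => (hr.1.const_mul lam).add (hr.2.const_mul (1 - lam))) g₃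
      · exact setLIntegral_pullbackDensity_le hs hV
          (fun r hr => (hr.1.const_mul (1 - lam)).add (hr.2.const_mul lam)) g₄
    _ = ((∫⁻ x, g₃ x) * ∫⁻ x, g₄ x) ^ (2⁻¹ : ℝ) :=
      (ENNReal.mul_rpow_of_nonneg _ _ (by norm_num)).symm
  simpa using (ENNReal.le_rpow_inv_iff two_pos).1 key

theorem fourFunctionInequality_real {lam : ℝ} (hlam : lam ∈ Icc (0 : ℝ) 1) :
    FourFunctionInequality (volume : Measure ℝ) lam :=
  .of_lintegral_eq_one fun _ _ _ _ hm₁ hm₂ hm₃ hm₄ h₁ h₂ hg =>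
    one_le_lintegral_mul_lintegral_of_lintegral_eq_one hlam hm₁ hm₂ hm₃ hm₄ h₁ h₂ hg

theorem measurePreserving_finConsLinearEquiv (d : ℕ) :
    MeasurePreserving (Fin.consLinearEquiv ℝ fun _ : Fin (d + 1) => ℝ) := by
  have hcons : ⇑(Fin.consLinearEquiv ℝ fun _ : Fin (d + 1) => ℝ) =
      (MeasurableEquiv.piFinSuccAbove (fun _ : Fin (d + 1) => ℝ) 0).symm := by
    funext p
    simp only [MeasurableEquiv.piFinSuccAbove_symm_apply, Fin.insertNthEquiv_zero]
    rfl
  rw [hcons]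
  exact (volume_preserving_piFinSuccAbove (fun _ : Fin (d + 1) => ℝ) 0).symm

theorem fourFunctionInequality_pi {lam : ℝ} (hlam : lam ∈ Icc (0 : ℝ) 1) :
    ∀ d : ℕ, FourFunctionInequality (volume : Measure (Fin d → ℝ)) lam
  | 0 => .of_unique _ _
  | d + 1 =>
    .of_measurePreserving
      ((fourFunctionInequality_real hlam).prod (fourFunctionInequality_pi hlam d))
      (Fin.consLinearEquiv ℝ fun _ : Fin (d + 1) => ℝ).toLinearMap
      (measurePreserving_finConsLinearEquiv d)

theorem cordero_erausquin_maurey (d : ℕ) (lam : ℝ) (hlam : lam ∈ Set.Ioo (0:ℝ) 1)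
    (f₁ f₂ f₃ f₄ : (Fin d → ℝ) → ℝ)
    (hnn₁ : ∀ x, 0 ≤ f₁ x) (hnn₂ : ∀ x, 0 ≤ f₂ x)
    (hnn₃ : ∀ x, 0 ≤ f₃ x) (hnn₄ : ∀ x, 0 ≤ f₄ x)
    (hi₁ : Integrable f₁) (hi₂ : Integrable f₂) (hi₃ : Integrable f₃) (hi₄ : Integrable f₄)
    (h : ∀ x y, f₁ x * f₂ y ≤ f₃ (lam • x + (1 - lam) • y) * f₄ ((1 - lam) • x + lam • y)) :
    (∫ x, f₁ x) * (∫ y, f₂ y) ≤ (∫ x, f₃ x) * (∫ y, f₄ y) :=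
  (fourFunctionInequality_pi (Ioo_subset_Icc_self hlam) d).integral_mul_integral_le
    hnn₁ hnn₂ hnn₃ hnn₄ hi₁ hi₂ hi₃ hi₄ h
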